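/- arXiv:1304.3964 — 3 statements merged into one kernel-verified Lean document; each statement's English description precedes it below -/
import Mathlib

section
/- Let (f_k)_{k\ge1} be a uniformly bounded sequence of functions f_k : [0,T] \to \mathbb{R}^n (not necessarily continuous) such that for every \varepsilon > 0 there exist \delta(\varepsilon) > 0 and k_0(\varepsilon) \ge 1 with |f_k(t) - f_k(s)| < \varepsilon whenever |t-s| < \delta(\varepsilon) and k > k_0(\varepsilon). Then there exist a subsequence (f_{k_j}) and a continuous function f : [0,T] \to \mathbb{R}^n such that \sup_{t\in[0,T]}|f_{k_j}(t) - f(t)| \to 0 as j \to \infty. -/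
open Filter Topology

private lemma abs_min_sub_min_le_abs' (a b c : ℝ) : |min c a - min c b| ≤ |a - b| := by
  have h3 := le_abs_self (a - b)
  have h4 := neg_abs_le (a - b)
  have h5 := abs_nonneg (a - b)
  rw [abs_sub_le_iff]
  constructor <;> simp only [min_def] <;> split_ifs <;> linarith

private lemma clamp_lip (T a b : ℝ) : |max 0 (min T a) - max 0 (min T b)| ≤ |a - b| := by
  calc |max 0 (min T a) - max 0 (min T b)|
      = |max (min T a) 0 - max (min T b) 0| := by rw [max_comm (0:ℝ), max_comm (0:ℝ)]
    _ ≤ |min T a - min T b| := abs_max_sub_max_le_abs _ _ _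
    _ ≤ |a - b| := abs_min_sub_min_le_abs' a b T

/-- An extension of the Arzelà–Ascoli theorem: a uniformly bounded sequence of
(possibly discontinuous) functions `f_k : [0,T] → ℝⁿ` whose moduli of continuity
become uniform along the tail of the sequence has a subsequence converging
uniformly on `[0,T]` to a continuous function. -/
theorem arzela_ascoli_extension {n : ℕ} (T : ℝ) (hT : 0 ≤ T)
    (f : ℕ → ℝ → EuclideanSpace ℝ (Fin n))
    (hbdd : ∃ M : ℝ, ∀ k : ℕ, ∀ t ∈ Set.Icc (0 : ℝ) T, ‖f k t‖ ≤ M)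
    (hequi : ∀ ε > (0 : ℝ), ∃ δ > (0 : ℝ), ∃ k₀ : ℕ,
      ∀ k > k₀, ∀ t ∈ Set.Icc (0 : ℝ) T, ∀ s ∈ Set.Icc (0 : ℝ) T,
        |t - s| < δ → ‖f k t - f k s‖ < ε) :
    ∃ φ : ℕ → ℕ, StrictMono φ ∧
      ∃ g : ℝ → EuclideanSpace ℝ (Fin n), ContinuousOn g (Set.Icc 0 T) ∧
        TendstoUniformlyOn (fun j => f (φ j)) g atTop (Set.Icc 0 T) := by
  obtain ⟨M, hM⟩ := hbdd
  -- a countable set of points, dense in [0,T]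
  obtain ⟨q, hq⟩ := exists_surjective_nat ℚ
  set u : ℕ → ℝ := fun i => max 0 (min T (q i)) with hu_def
  have hu_mem : ∀ i, u i ∈ Set.Icc (0 : ℝ) T := fun i =>
    ⟨le_max_left _ _, max_le hT (min_le_left _ _)⟩
  have hu_dense : ∀ t ∈ Set.Icc (0 : ℝ) T, ∀ δ > (0 : ℝ), ∃ i, |t - u i| < δ := by
    intro t ht δ hδ
    obtain ⟨r, hr1, hr2⟩ := exists_rat_btwn (show t - δ < t + δ by linarith)
    obtain ⟨i, hi⟩ := hq r
    refine ⟨i, ?_⟩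
    have ht' : t = max 0 (min T t) := by
      rw [min_eq_right ht.2, max_eq_right ht.1]
    calc |t - u i| = |max 0 (min T t) - max 0 (min T (q i))| := by rw [← ht']
      _ ≤ |t - (q i)| := clamp_lip T t (q i)
      _ < δ := by rw [hi, abs_lt]; constructor <;> linarith
  -- extract a subsequence converging at every point `u i`
  set S : Set (ℕ → EuclideanSpace ℝ (Fin n)) :=
    Set.univ.pi fun _ => Metric.closedBall 0 M with hS_def
  have hS : IsCompact S := isCompact_univ_pi fun _ => isCompact_closedBall _ _
  have hmem : ∀ k, (fun i => f k (u i)) ∈ S := by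
    intro k i _
    simpa [Metric.mem_closedBall, dist_zero_right] using hM k (u i) (hu_mem i)
  obtain ⟨a, -, φ, hφ, ha⟩ := hS.tendsto_subseq hmem
  have ha' : ∀ i, Tendsto (fun j => f (φ j) (u i)) atTop (𝓝 (a i)) := by
    rw [tendsto_pi_nhds] at ha
    exact fun i => ha i
  refine ⟨φ, hφ, ?_⟩
  -- uniform Cauchy on [0,T]
  have hcauchy : UniformCauchySeqOn (fun j => f (φ j)) atTop (Set.Icc 0 T) := by
    rw [Metric.uniformCauchySeqOn_iff]
    intro ε hε
    obtain ⟨δ, hδ, k₀, hk⟩ := hequi (ε / 4) (by linarith)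
    have hcover : Set.Icc (0 : ℝ) T ⊆ ⋃ i : ℕ, Metric.ball (u i) δ := by
      intro t ht
      obtain ⟨i, hi⟩ := hu_dense t ht δ hδ
      exact Set.mem_iUnion.2 ⟨i, by simpa [Metric.mem_ball, Real.dist_eq] using hi⟩
    obtain ⟨I, hI⟩ := isCompact_Icc.elim_finite_subcover
      (fun i => Metric.ball (u i) δ) (fun i => Metric.isOpen_ball) hcover
    have hNs : ∀ i : ℕ, ∃ N, ∀ j ≥ N, ∀ j' ≥ N,
        dist (f (φ j) (u i)) (f (φ j') (u i)) < ε / 4 := by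
      intro i
      obtain ⟨N, hN⟩ := Metric.cauchySeq_iff.1 (ha' i).cauchySeq (ε / 4) (by linarith)
      exact ⟨N, hN⟩
    choose N hN using hNs
    refine ⟨max (k₀ + 1) (I.sup N), fun j hj j' hj' t ht => ?_⟩
    obtain ⟨i, hiI, hit⟩ := Set.mem_iUnion₂.1 (hI ht)
    have hit' : |t - u i| < δ := by rwa [Metric.mem_ball, Real.dist_eq] at hit
    have hφj : φ j > k₀ :=
      lt_of_lt_of_le (Nat.lt_of_succ_le (le_trans (le_max_left _ _) hj)) hφ.le_apply
    have hφj' : φ j' > k₀ :=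
      lt_of_lt_of_le (Nat.lt_of_succ_le (le_trans (le_max_left _ _) hj')) hφ.le_apply
    have hjN : j ≥ N i := le_trans (le_trans (Finset.le_sup hiI) (le_max_right _ _)) hj
    have hjN' : j' ≥ N i := le_trans (le_trans (Finset.le_sup hiI) (le_max_right _ _)) hj'
    have h1 : dist (f (φ j) t) (f (φ j) (u i)) < ε / 4 := by
      rw [dist_eq_norm]; exact hk (φ j) hφj t ht (u i) (hu_mem i) hit'
    have h2 : dist (f (φ j) (u i)) (f (φ j') (u i)) < ε / 4 := hN i j hjN j' hjN'
    have h3 : dist (f (φ j') (u i)) (f (φ j') t) < ε / 4 := by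
      rw [dist_eq_norm, ← norm_neg, neg_sub]
      exact hk (φ j') hφj' t ht (u i) (hu_mem i) hit'
    calc dist (f (φ j) t) (f (φ j') t)
        ≤ dist (f (φ j) t) (f (φ j) (u i)) + dist (f (φ j) (u i)) (f (φ j') (u i))
          + dist (f (φ j') (u i)) (f (φ j') t) := dist_triangle4 _ _ _ _
      _ < ε / 4 + ε / 4 + ε / 4 := by linarith
      _ < ε := by linarith
  -- pointwise Cauchy, hence pointwise limit
  have hpt : ∀ t ∈ Set.Icc (0 : ℝ) T, CauchySeq fun j => f (φ j) t := by
    intro t ht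
    rw [Metric.cauchySeq_iff]
    intro ε hε
    obtain ⟨N, hN⟩ := Metric.uniformCauchySeqOn_iff.1 hcauchy ε hε
    exact ⟨N, fun m hm m' hm' => hN m hm m' hm' t ht⟩
  set g : ℝ → EuclideanSpace ℝ (Fin n) := fun t => limUnder atTop fun j => f (φ j) t
    with hg_def
  have hg : ∀ t ∈ Set.Icc (0 : ℝ) T, Tendsto (fun j => f (φ j) t) atTop (𝓝 (g t)) :=
    fun t ht => (hpt t ht).tendsto_limUnder
  refine ⟨g, ?_, hcauchy.tendstoUniformlyOn_of_tendsto hg⟩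
  -- continuity of the limit
  rw [Metric.continuousOn_iff]
  intro b hb ε hε
  obtain ⟨δ, hδ, k₀, hk⟩ := hequi (ε / 2) (by linarith)
  refine ⟨δ, hδ, fun t ht hdist => ?_⟩
  have hlim : Tendsto (fun j => dist (f (φ j) t) (f (φ j) b)) atTop
      (𝓝 (dist (g t) (g b))) := (hg t ht).dist (hg b hb)
  have hev : ∀ᶠ j in atTop, dist (f (φ j) t) (f (φ j) b) ≤ ε / 2 := by
    filter_upwards [eventually_ge_atTop (k₀ + 1)] with j hj
    have : φ j > k₀ := lt_of_lt_of_le (Nat.lt_of_succ_le hj) hφ.le_apply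
    rw [dist_eq_norm]
    exact le_of_lt (hk (φ j) this t ht b hb (by rwa [Real.dist_eq] at hdist))
  have := le_of_tendsto hlim hev
  linarith
end

section
/- Let u, v and \theta be elements of an L^2 space of \mathbb{R}^m-valued random variables measurable appropriately, R, \hat R symmetric positive definite m\times m matrices with \hat R = R + \bar R, and let E denote a conditional expectation. Then \mathbb{E}[\langle R\hat u + \bar R E[\hat u] + 2\theta, \hat u\rangle] = \mathbb{E}[|R^{1/2}(\hat u - E[\hat u]) + R^{-1/2}\theta|^2 + |\hat R^{1/2}E[\hat u] + \hat R^{-1/2}E[\theta]|^2 - \langle R^{-1}\theta,\theta\rangle - \langle\hat R^{-1}E[\theta],E[\theta]\rangle], where \hat u = u - v. -/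
open MeasureTheory Matrix

open scoped ComplexOrder in
/-- The positive semidefinite square root of a positive semidefinite matrix
(the definition `Matrix.PosSemidef.sqrt` of the older Mathlib, since removed). -/
noncomputable def Matrix.PosSemidef.sqrt {n : Type*} [Fintype n] [DecidableEq n] {𝕜 : Type*}
    [RCLike 𝕜] {A : Matrix n n 𝕜} (hA : A.PosSemidef) : Matrix n n 𝕜 :=
  hA.1.eigenvectorUnitary.1 * diagonal ((↑) ∘ (√·) ∘ hA.1.eigenvalues) *
    (star hA.1.eigenvectorUnitary : Matrix n n 𝕜)

/-!
Write `a = E[û]` and `b = E[θ]`. Expanding the two squares, the right-hand integrand equals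
`⟨R(û - a), û - a⟩ + 2⟨θ, û - a⟩ + ⟨R̂a, a⟩ + 2⟨b, a⟩`, and this differs from the left-hand
integrand by `⟨(R̄ + 2R)a, û - a⟩ + 2⟨a, θ - b⟩`. Both cross terms pair a `𝒢`-measurable
square-integrable vector with something of vanishing conditional expectation, so by the
pull-out property they integrate to zero.
-/

namespace Matrix.PosSemidef

open scoped ComplexOrder

variable {n 𝕜 : Type*} [Fintype n] [DecidableEq n] [RCLike 𝕜] {A : Matrix n n 𝕜}

lemma sqrt_eq_cfc (hA : A.PosSemidef) : hA.sqrt = cfc Real.sqrt A := by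
  rw [hA.1.cfc_eq]; rfl

lemma isHermitian_sqrt (hA : A.PosSemidef) : hA.sqrt.IsHermitian := by
  rw [sqrt_eq_cfc]; exact cfc_predicate _ _

lemma sqrt_mul_self (hA : A.PosSemidef) : hA.sqrt * hA.sqrt = A := by
  have hspec : ∀ x ∈ spectrum ℝ A, 0 ≤ x := by
    rw [hA.1.spectrum_real_eq_range_eigenvalues]
    rintro _ ⟨i, rfl⟩
    exact hA.eigenvalues_nonneg i
  calc hA.sqrt * hA.sqrt = cfc (fun x => √x * √x) A := by
        rw [sqrt_eq_cfc, cfc_mul Real.sqrt Real.sqrt A]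
    _ = cfc id A := cfc_congr fun x hx => Real.mul_self_sqrt (hspec x hx)
    _ = A := cfc_id ℝ A hA.1

end Matrix.PosSemidef

theorem Matrix.IsSymm.dotProduct_self_mulVec_add_inv_mulVec {ι : Type*} [Fintype ι]
    [DecidableEq ι] {S : Matrix ι ι ℝ} (hS : S.IsSymm) (hdet : IsUnit S.det) (x y : ι → ℝ) :
    (S *ᵥ x + S⁻¹ *ᵥ y) ⬝ᵥ (S *ᵥ x + S⁻¹ *ᵥ y) =
      (S * S) *ᵥ x ⬝ᵥ x + 2 * (y ⬝ᵥ x) + (S * S)⁻¹ *ᵥ y ⬝ᵥ y := by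
  have mulVec_dotProduct_mulVec (M N : Matrix ι ι ℝ) (a b : ι → ℝ) :
      M *ᵥ a ⬝ᵥ N *ᵥ b = (Nᵀ * M) *ᵥ a ⬝ᵥ b := by
    rw [dotProduct_mulVec, ← mulVec_transpose, mulVec_mulVec]
  simp only [dotProduct_add, add_dotProduct, mulVec_dotProduct_mulVec, hS.eq, hS.inv.eq,
    mul_nonsing_inv S hdet, nonsing_inv_mul S hdet, Matrix.mul_inv_rev, one_mulVec, dotProduct_comm x y]
  ring

theorem Matrix.PosDef.dotProduct_self_sqrt_mulVec_add_inv_sqrt_mulVec {ι : Type*} [Fintype ι]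
    [DecidableEq ι] {M : Matrix ι ι ℝ} (hM : M.PosDef) (x y : ι → ℝ) :
    (hM.posSemidef.sqrt *ᵥ x + hM.posSemidef.sqrt⁻¹ *ᵥ y) ⬝ᵥ
        (hM.posSemidef.sqrt *ᵥ x + hM.posSemidef.sqrt⁻¹ *ᵥ y) =
      M *ᵥ x ⬝ᵥ x + 2 * (y ⬝ᵥ x) + M⁻¹ *ᵥ y ⬝ᵥ y := by
  have hsq := hM.posSemidef.sqrt_mul_self
  have hsymm := isHermitian_iff_isSymm.mp hM.posSemidef.isHermitian_sqrt
  have hunit : IsUnit hM.posSemidef.sqrt := isUnit_of_mul_isUnit_left (hsq ▸ hM.isUnit)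
  rw [hsymm.dotProduct_self_mulVec_add_inv_mulVec ((isUnit_iff_isUnit_det _).mp hunit), hsq]

theorem Matrix.PosDef.completed_squares_eq {ι : Type*} [Fintype ι] [DecidableEq ι]
    {R Rbar Rhat : Matrix ι ι ℝ} (hR : R.PosDef) (hRhat : Rhat.PosDef) (hsum : Rhat = R + Rbar)
    (x a θ b : ι → ℝ) :
    (hR.posSemidef.sqrt *ᵥ (x - a) + hR.posSemidef.sqrt⁻¹ *ᵥ θ) ⬝ᵥ
        (hR.posSemidef.sqrt *ᵥ (x - a) + hR.posSemidef.sqrt⁻¹ *ᵥ θ)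
      + (hRhat.posSemidef.sqrt *ᵥ a + hRhat.posSemidef.sqrt⁻¹ *ᵥ b) ⬝ᵥ
        (hRhat.posSemidef.sqrt *ᵥ a + hRhat.posSemidef.sqrt⁻¹ *ᵥ b)
      - R⁻¹ *ᵥ θ ⬝ᵥ θ - Rhat⁻¹ *ᵥ b ⬝ᵥ b
      = (R *ᵥ x + Rbar *ᵥ a + (2 : ℝ) • θ) ⬝ᵥ x
        - ((Rbar + (2 : ℝ) • R) *ᵥ a ⬝ᵥ (x - a) + 2 * (a ⬝ᵥ (θ - b))) := by
  have hsymm : R *ᵥ x ⬝ᵥ a = R *ᵥ a ⬝ᵥ x := by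
    rw [dotProduct_comm, dotProduct_mulVec, ← mulVec_transpose,
      (isHermitian_iff_isSymm.mp hR.isHermitian).eq]
  rw [hR.dotProduct_self_sqrt_mulVec_add_inv_sqrt_mulVec,
    hRhat.dotProduct_self_sqrt_mulVec_add_inv_sqrt_mulVec, hsum]
  simp only [add_mulVec, mulVec_sub, smul_mulVec, add_dotProduct, sub_dotProduct,
    dotProduct_sub, smul_dotProduct, smul_eq_mul, dotProduct_comm θ x,
    dotProduct_comm b a, dotProduct_comm θ a] at hsymm ⊢
  linarith

namespace MeasureTheory

variable {Ω : Type*} {m mΩ : MeasurableSpace Ω} {μ : Measure Ω}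

theorem integral_bilin_condExp_of_stronglyMeasurable_left {E F G : Type*}
    [NormedAddCommGroup E] [NormedSpace ℝ E] [CompleteSpace E]
    [NormedAddCommGroup F] [NormedSpace ℝ F]
    [NormedAddCommGroup G] [NormedSpace ℝ G] [CompleteSpace G]
    (B : F →L[ℝ] E →L[ℝ] G) (hm : m ≤ mΩ) [SigmaFinite (μ.trim hm)] {f : Ω → F} {g : Ω → E}
    (hf : StronglyMeasurable[m] f) (hfg : Integrable (fun ω ↦ B (f ω) (g ω)) μ)
    (hg : Integrable g μ) :
    ∫ ω, B (f ω) (μ[g|m] ω) ∂μ = ∫ ω, B (f ω) (g ω) ∂μ := by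
  calc ∫ ω, B (f ω) (μ[g|m] ω) ∂μ = ∫ ω, μ[fun ω ↦ B (f ω) (g ω)|m] ω ∂μ :=
        integral_congr_ae (condExp_bilin_of_stronglyMeasurable_left B hf hfg hg).symm
    _ = ∫ ω, B (f ω) (g ω) ∂μ := integral_condExp hm

variable {ι : Type*} [Fintype ι]

theorem MemLp.integrable_dotProduct {f g : Ω → ι → ℝ} (hf : MemLp f 2 μ) (hg : MemLp g 2 μ) :
    Integrable (fun ω ↦ f ω ⬝ᵥ g ω) μ :=
  memLp_one_iff_integrable.1 <|
    (dotProductBilin ℝ ℝ (A := ℝ) (m := ι)).toContinuousBilinearMap.memLp_of_bilin 1 hf hg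

theorem MemLp.mulVec {κ : Type*} [Fintype κ] {p : ENNReal} (M : Matrix κ ι ℝ) {f : Ω → ι → ℝ}
    (hf : MemLp f p μ) : MemLp (fun ω ↦ M *ᵥ f ω) p μ :=
  (Matrix.mulVecLin M).toContinuousLinearMap.comp_memLp' hf

theorem integral_dotProduct_sub_condExp_eq_zero [IsFiniteMeasure μ] (hm : m ≤ mΩ)
    {f g : Ω → ι → ℝ} (hfm : StronglyMeasurable[m] f) (hf : MemLp f 2 μ) (hg : MemLp g 2 μ) :
    ∫ ω, f ω ⬝ᵥ (g ω - μ[g|m] ω) ∂μ = 0 := by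
  simp_rw [dotProduct_sub]
  rw [integral_sub (hf.integrable_dotProduct hg)
    (hf.integrable_dotProduct (hg.condExp one_le_two)), sub_eq_zero]
  exact (integral_bilin_condExp_of_stronglyMeasurable_left
    (dotProductBilin ℝ ℝ (A := ℝ) (m := ι)).toContinuousBilinearMap hm hfm
    (hf.integrable_dotProduct hg) (hg.integrable one_le_two)).symm

theorem integral_sub_condExp_cross_terms [IsFiniteMeasure μ] (hm : m ≤ mΩ) {L : Ω → ℝ}
    (hL : Integrable L μ) (C : Matrix ι ι ℝ) {x θ : Ω → ι → ℝ} (hx : MemLp x 2 μ)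
    (hθ : MemLp θ 2 μ) :
    ∫ ω, L ω - (C *ᵥ μ[x|m] ω ⬝ᵥ (x ω - μ[x|m] ω) + 2 * (μ[x|m] ω ⬝ᵥ (θ ω - μ[θ|m] ω))) ∂μ =
      ∫ ω, L ω ∂μ := by
  have ha : MemLp (μ[x|m]) 2 μ := hx.condExp one_le_two
  have hCa : StronglyMeasurable[m] fun ω ↦ C *ᵥ μ[x|m] ω :=
    (continuous_const.matrix_mulVec continuous_id).comp_stronglyMeasurable
      stronglyMeasurable_condExp
  have hint₁ : Integrable (fun ω ↦ C *ᵥ μ[x|m] ω ⬝ᵥ (x ω - μ[x|m] ω)) μ :=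
    (ha.mulVec C).integrable_dotProduct (hx.sub ha)
  have hint₂ : Integrable (fun ω ↦ μ[x|m] ω ⬝ᵥ (θ ω - μ[θ|m] ω)) μ :=
    ha.integrable_dotProduct (hθ.sub (hθ.condExp one_le_two))
  have hcross : Integrable (fun ω ↦ C *ᵥ μ[x|m] ω ⬝ᵥ (x ω - μ[x|m] ω) +
      2 * (μ[x|m] ω ⬝ᵥ (θ ω - μ[θ|m] ω))) μ := hint₁.add (hint₂.const_mul 2)
  rw [integral_sub hL hcross, integral_add hint₁ (hint₂.const_mul 2),
    integral_const_mul, integral_dotProduct_sub_condExp_eq_zero hm hCa (ha.mulVec C) hx,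
    integral_dotProduct_sub_condExp_eq_zero hm stronglyMeasurable_condExp ha hθ, mul_zero,
    add_zero, sub_zero]

end MeasureTheory

/-- Completion of squares with a conditional expectation: with `û = u - v`,
`R, R̂ = R + R̄ ≻ 0`, and `E = 𝔼[·|𝒢]`,
`𝔼⟨Rû + R̄E[û] + 2θ, û⟩ = 𝔼[|R^{1/2}(û-E[û]) + R^{-1/2}θ|²
 + |R̂^{1/2}E[û] + R̂^{-1/2}E[θ]|² - ⟨R⁻¹θ,θ⟩ - ⟨R̂⁻¹E[θ],E[θ]⟩]`. -/
theorem completion_of_squares_condexp {m : ℕ}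
    {Ω : Type*} {m0 : MeasurableSpace Ω} (μ : Measure Ω) [IsProbabilityMeasure μ]
    (𝒢 : MeasurableSpace Ω) (h𝒢 : 𝒢 ≤ m0)
    (u v θ : Ω → Fin m → ℝ)
    (hu : MemLp u 2 μ) (hv : MemLp v 2 μ) (hθ : MemLp θ 2 μ)
    (R Rbar Rhat : Matrix (Fin m) (Fin m) ℝ)
    (hRhat : Rhat = R + Rbar)
    (hR : R.PosDef) (hRhatpos : Rhat.PosDef) :
    (∫ ω, (R.mulVec (u ω - v ω)
        + Rbar.mulVec ((μ[(fun ω => u ω - v ω)|𝒢]) ω)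
        + (2 : ℝ) • θ ω) ⬝ᵥ (u ω - v ω) ∂μ)
    =
    ∫ ω,
      ((hR.posSemidef.sqrt.mulVec (u ω - v ω - (μ[(fun ω => u ω - v ω)|𝒢]) ω)
          + (hR.posSemidef.sqrt)⁻¹.mulVec (θ ω)) ⬝ᵥ
        (hR.posSemidef.sqrt.mulVec (u ω - v ω - (μ[(fun ω => u ω - v ω)|𝒢]) ω)
          + (hR.posSemidef.sqrt)⁻¹.mulVec (θ ω))
      + (hRhatpos.posSemidef.sqrt.mulVec ((μ[(fun ω => u ω - v ω)|𝒢]) ω)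
          + (hRhatpos.posSemidef.sqrt)⁻¹.mulVec ((μ[θ|𝒢]) ω)) ⬝ᵥ
        (hRhatpos.posSemidef.sqrt.mulVec ((μ[(fun ω => u ω - v ω)|𝒢]) ω)
          + (hRhatpos.posSemidef.sqrt)⁻¹.mulVec ((μ[θ|𝒢]) ω))
      - R⁻¹.mulVec (θ ω) ⬝ᵥ θ ω
      - Rhat⁻¹.mulVec ((μ[θ|𝒢]) ω) ⬝ᵥ (μ[θ|𝒢]) ω) ∂μ := by
  simp_rw [hR.completed_squares_eq hRhatpos hRhat]
  have hx : MemLp (fun ω => u ω - v ω) 2 μ := hu.sub hv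
  have hlhs := (((hx.mulVec R).add ((hx.condExp (m := 𝒢) one_le_two).mulVec Rbar)).add
    (hθ.const_smul (2 : ℝ))).integrable_dotProduct hx
  exact (integral_sub_condExp_cross_terms h𝒢 hlhs _ hx hθ).symm
end

section
/- Let F : \{(s,\tau): 0\le\tau\le s\le T\}\times\mathbb{R}^d\times\mathbb{R}^d \to \mathbb{R}^d be continuous and continuously differentiable in its last two arguments, and let \Lambda^1, \Lambda^2 be continuous functions on \{0\le\tau\le s\le T\}, C^1 in s, both satisfying \Lambda_s(s,\tau) = F(s,\tau,\Lambda(s,\tau),\Lambda(s,s)) with \Lambda(T,\tau) = \Lambda_0(\tau). Assume both solutions take values in a compact set on which \partial_\gamma F and \partial_{\bar\gamma} F are bounded. Then \Lambda^1 = \Lambda^2. -/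
/-- Uniqueness for the non-standard Riccati-type system
`Λ_s(s,τ) = F(s,τ,Λ(s,τ),Λ(s,s))`, `Λ(T,τ) = Λ₀(τ)`, whose right-hand side involves
the diagonal values `Λ(s,s)`: two solutions with values in a compact set `S` on
which `F` is Lipschitz in its last two arguments coincide. -/
theorem diagonal_riccati_uniqueness {d : ℕ} (T : ℝ) (hT : 0 ≤ T)
    (F : ℝ → ℝ → (Fin d → ℝ) → (Fin d → ℝ) → (Fin d → ℝ))
    (Λ₀ : ℝ → (Fin d → ℝ))
    (Λ₁ Λ₂ : ℝ → ℝ → (Fin d → ℝ))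
    (S : Set (Fin d → ℝ)) (hS : IsCompact S)
    (hval₁ : ∀ τ s, 0 ≤ τ → τ ≤ s → s ≤ T → Λ₁ s τ ∈ S)
    (hval₂ : ∀ τ s, 0 ≤ τ → τ ≤ s → s ≤ T → Λ₂ s τ ∈ S)
    (L : ℝ)
    (hLip : ∀ s τ, 0 ≤ τ → τ ≤ s → s ≤ T →
      ∀ γ₁ ∈ S, ∀ γ₂ ∈ S, ∀ δ₁ ∈ S, ∀ δ₂ ∈ S,
        ‖F s τ γ₁ δ₁ - F s τ γ₂ δ₂‖ ≤ L * (‖γ₁ - γ₂‖ + ‖δ₁ - δ₂‖))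
    (hFcont : ∀ τ ∈ Set.Icc (0 : ℝ) T,
      Continuous fun q : ℝ × (Fin d → ℝ) × (Fin d → ℝ) => F q.1 τ q.2.1 q.2.2)
    (hcont₁ : ContinuousOn (fun p : ℝ × ℝ => Λ₁ p.1 p.2)
      {p : ℝ × ℝ | 0 ≤ p.2 ∧ p.2 ≤ p.1 ∧ p.1 ≤ T})
    (hcont₂ : ContinuousOn (fun p : ℝ × ℝ => Λ₂ p.1 p.2)
      {p : ℝ × ℝ | 0 ≤ p.2 ∧ p.2 ≤ p.1 ∧ p.1 ≤ T})
    (hderiv₁ : ∀ τ ∈ Set.Icc (0 : ℝ) T, ∀ s ∈ Set.Icc τ T,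
      HasDerivAt (fun s => Λ₁ s τ) (F s τ (Λ₁ s τ) (Λ₁ s s)) s)
    (hderiv₂ : ∀ τ ∈ Set.Icc (0 : ℝ) T, ∀ s ∈ Set.Icc τ T,
      HasDerivAt (fun s => Λ₂ s τ) (F s τ (Λ₂ s τ) (Λ₂ s s)) s)
    (hterm₁ : ∀ τ ∈ Set.Icc (0 : ℝ) T, Λ₁ T τ = Λ₀ τ)
    (hterm₂ : ∀ τ ∈ Set.Icc (0 : ℝ) T, Λ₂ T τ = Λ₀ τ) :
    ∀ τ s, 0 ≤ τ → τ ≤ s → s ≤ T → Λ₁ s τ = Λ₂ s τ := by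

  classical
  set L' : ℝ := max L 1 with hL'def
  have hL'pos : (0:ℝ) < L' := lt_of_lt_of_le one_pos (le_max_right _ _)
  have hLL' : L ≤ L' := le_max_left _ _
  set ε : ℝ := 1 / (4 * L') with hεdef
  have hεpos : (0:ℝ) < ε := by positivity
  -- Key local step: if the two solutions agree at time `a` (for all `τ ≤ a`),
  -- then they agree on the strip `[a - ε, a]`.
  have key : ∀ a : ℝ, 0 ≤ a → a ≤ T →
      (∀ σ, 0 ≤ σ → σ ≤ a → Λ₁ a σ = Λ₂ a σ) →
      ∀ u τ, a - ε ≤ u → 0 ≤ τ → τ ≤ u → u ≤ a → Λ₁ u τ = Λ₂ u τ := by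
    intro a ha0 haT hA
    set b : ℝ := max (a - ε) 0 with hbdef
    have hb0 : 0 ≤ b := le_max_right _ _
    have hba : b ≤ a := max_le (by linarith) ha0
    have habε : a - b ≤ ε := by
      have : a - ε ≤ b := le_max_left _ _
      linarith
    set R : Set (ℝ × ℝ) := {p : ℝ × ℝ | b ≤ p.1 ∧ p.1 ≤ a ∧ 0 ≤ p.2 ∧ p.2 ≤ p.1}
      with hRdef
    have hRclosed : IsClosed R := by
      have : R = {p : ℝ × ℝ | b ≤ p.1} ∩ ({p : ℝ × ℝ | p.1 ≤ a} ∩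
          ({p : ℝ × ℝ | 0 ≤ p.2} ∩ {p : ℝ × ℝ | p.2 ≤ p.1})) := by
        ext p; simp [hRdef, and_assoc]
      rw [this]
      exact (isClosed_le continuous_const continuous_fst).inter
        ((isClosed_le continuous_fst continuous_const).inter
          ((isClosed_le continuous_const continuous_snd).inter
            (isClosed_le continuous_snd continuous_fst)))
    have hRsub : R ⊆ Set.Icc b a ×ˢ Set.Icc 0 a := by
      rintro ⟨u, τ⟩ ⟨h1, h2, h3, h4⟩
      exact ⟨⟨h1, h2⟩, ⟨h3, h4.trans h2⟩⟩
    have hRcompact : IsCompact R :=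
      ((isCompact_Icc.prod isCompact_Icc).of_isClosed_subset hRclosed hRsub)
    have hRne : R.Nonempty := ⟨(a, 0), le_refl a |>.trans_eq rfl |> fun _ => ⟨hba, le_refl a, le_refl 0, ha0⟩⟩
    have hRdom : R ⊆ {p : ℝ × ℝ | 0 ≤ p.2 ∧ p.2 ≤ p.1 ∧ p.1 ≤ T} := by
      rintro ⟨u, τ⟩ ⟨h1, h2, h3, h4⟩
      exact ⟨h3, h4, h2.trans haT⟩
    set g : ℝ × ℝ → ℝ := fun p => ‖Λ₁ p.1 p.2 - Λ₂ p.1 p.2‖ with hgdef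
    have hgcont : ContinuousOn g R :=
      ((hcont₁.sub hcont₂).norm).mono hRdom
    obtain ⟨p₀, hp₀R, hp₀max⟩ := hRcompact.exists_isMaxOn hRne hgcont
    set M : ℝ := g p₀ with hMdef
    have hM0 : 0 ≤ M := norm_nonneg _
    obtain ⟨hbu₀, hu₀a, hτ₀0, hτ₀u₀⟩ := hp₀R
    set u₀ : ℝ := p₀.1
    set τ₀ : ℝ := p₀.2
    -- derivative of the difference on [u₀, a]
    have hτ₀T : τ₀ ∈ Set.Icc (0:ℝ) T := ⟨hτ₀0, (hτ₀u₀.trans hu₀a).trans haT⟩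
    have hsub : ∀ x ∈ Set.Icc u₀ a,
        HasDerivWithinAt (fun s => Λ₁ s τ₀ - Λ₂ s τ₀)
          (F x τ₀ (Λ₁ x τ₀) (Λ₁ x x) - F x τ₀ (Λ₂ x τ₀) (Λ₂ x x)) (Set.Icc u₀ a) x := by
      intro x hx
      have hxmem : x ∈ Set.Icc τ₀ T := ⟨hτ₀u₀.trans hx.1, hx.2.trans haT⟩
      exact ((hderiv₁ τ₀ hτ₀T x hxmem).sub (hderiv₂ τ₀ hτ₀T x hxmem)).hasDerivWithinAt
    have hbound : ∀ x ∈ Set.Ico u₀ a,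
        ‖F x τ₀ (Λ₁ x τ₀) (Λ₁ x x) - F x τ₀ (Λ₂ x τ₀) (Λ₂ x x)‖ ≤ 2 * L' * M := by
      intro x hx
      have hxT : x ≤ T := hx.2.le.trans haT
      have h0x : 0 ≤ x := hτ₀0.trans (hτ₀u₀.trans hx.1)
      have hm1 : (x, τ₀) ∈ R := ⟨hbu₀.trans hx.1, hx.2.le, hτ₀0, hτ₀u₀.trans hx.1⟩
      have hm2 : (x, x) ∈ R := ⟨hbu₀.trans hx.1, hx.2.le, h0x, le_refl x⟩
      have h1 : ‖Λ₁ x τ₀ - Λ₂ x τ₀‖ ≤ M := hp₀max hm1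
      have h2 : ‖Λ₁ x x - Λ₂ x x‖ ≤ M := hp₀max hm2
      calc ‖F x τ₀ (Λ₁ x τ₀) (Λ₁ x x) - F x τ₀ (Λ₂ x τ₀) (Λ₂ x x)‖
          ≤ L * (‖Λ₁ x τ₀ - Λ₂ x τ₀‖ + ‖Λ₁ x x - Λ₂ x x‖) :=
            hLip x τ₀ hτ₀0 (hτ₀u₀.trans hx.1) hxT
              (Λ₁ x τ₀) (hval₁ τ₀ x hτ₀0 (hτ₀u₀.trans hx.1) hxT)
              (Λ₂ x τ₀) (hval₂ τ₀ x hτ₀0 (hτ₀u₀.trans hx.1) hxT)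
              (Λ₁ x x) (hval₁ x x h0x (le_refl x) hxT)
              (Λ₂ x x) (hval₂ x x h0x (le_refl x) hxT)
        _ ≤ L' * (M + M) := by
            apply mul_le_mul hLL' (add_le_add h1 h2)
              (by positivity) hL'pos.le
        _ = 2 * L' * M := by ring
    have hMVT := norm_image_sub_le_of_norm_deriv_le_segment' hsub hbound a
      (Set.right_mem_Icc.mpr (hτ₀u₀.trans hu₀a |> fun _ => hu₀a))
    have hAτ₀ : Λ₁ a τ₀ = Λ₂ a τ₀ := hA τ₀ hτ₀0 (hτ₀u₀.trans hu₀a)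
    have hMbound : M ≤ 2 * L' * M * (a - u₀) := by
      have : ‖(Λ₁ a τ₀ - Λ₂ a τ₀) - (Λ₁ u₀ τ₀ - Λ₂ u₀ τ₀)‖ ≤ 2 * L' * M * (a - u₀) := hMVT
      rw [hAτ₀, sub_self, zero_sub, norm_neg] at this
      exact this
    have hMhalf : M ≤ M / 2 := by
      have h1 : 2 * L' * M * (a - u₀) ≤ 2 * L' * M * ε := by
        apply mul_le_mul_of_nonneg_left _ (by positivity)
        have : b ≤ u₀ := hbu₀
        linarith
      have h2 : 2 * L' * M * ε = M / 2 := by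
        rw [hεdef]; field_simp; ring
      linarith
    have hMzero : M = 0 := by linarith
    intro u τ hεu h0τ hτu hua
    have hbu : b ≤ u := max_le hεu (h0τ.trans hτu)
    have hmem : (u, τ) ∈ R := ⟨hbu, hua, h0τ, hτu⟩
    have hle : ‖Λ₁ u τ - Λ₂ u τ‖ ≤ 0 := by
      have h := hp₀max hmem
      have : g (u, τ) ≤ M := h
      simpa [hgdef, hMzero] using this
    have := le_antisymm hle (norm_nonneg _)
    exact sub_eq_zero.mp (by rwa [norm_eq_zero] at this)
  -- Induction: equality holds on [T - n·ε, T]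
  have main : ∀ n : ℕ, ∀ u τ, 0 ≤ τ → τ ≤ u → u ≤ T → T - n * ε ≤ u →
      Λ₁ u τ = Λ₂ u τ := by
    intro n
    induction n with
    | zero =>
      intro u τ h1 h2 h3 h4
      have hu : u = T := le_antisymm h3 (by simpa using h4)
      subst hu
      rw [hterm₁ τ ⟨h1, h2⟩, hterm₂ τ ⟨h1, h2⟩]
    | succ n ih =>
      intro u τ h0τ hτu huT h4
      set a : ℝ := max (T - n * ε) 0 with hadef
      have ha0 : 0 ≤ a := le_max_right _ _
      have haT : a ≤ T := max_le (by nlinarith [hεpos, Nat.cast_nonneg (α := ℝ) n]) hT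
      have hA : ∀ σ, 0 ≤ σ → σ ≤ a → Λ₁ a σ = Λ₂ a σ := fun σ h1 h2 =>
        ih a σ h1 h2 haT (le_max_left _ _)
      rcases le_or_gt a u with hu | hu
      · exact ih u τ h0τ hτu huT ((le_max_left _ _).trans hu)
      · apply key a ha0 haT hA u τ _ h0τ hτu hu.le
        have h4' : T - (n + 1 : ℝ) * ε ≤ u := by push_cast at h4; linarith
        rcases le_or_gt 0 (T - n * ε) with h | h
        · have : a = T - n * ε := max_eq_left h
          rw [this]; linarith
        · have : a = 0 := max_eq_right h.le
          rw [this]; linarith [hεpos, h0τ.trans hτu]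
  intro τ s h1 h2 h3
  obtain ⟨n, hn⟩ := exists_nat_ge (T / ε)
  apply main n s τ h1 h2 h3
  have : T ≤ n * ε := by
    rw [div_le_iff₀ hεpos] at hn
    linarith
  linarith [h1.trans h2]
end
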